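/- arXiv:1508.02946 — 2 statements merged into one kernel-verified Lean document; each statement's English description precedes it below -/
import Mathlib

section
/- Let F be a finite metric space with at least two points and no focal points, let 𝒰 be a 2-covering of F with Δ(𝒰) < Δ(F), let a₁ denote the smallest and a_k the largest diameter among the members of 𝒰 (so a_k = Δ(𝒰)), and let s_𝒰 be the unique s ∈ (0,∞) with H^{s}_𝒰(F) = Δ(F)^{s}. Then ln|𝒰| / ln(Δ(F)/δ(F)) ≤ ln|𝒰| / ln(Δ(F)/a₁) ≤ s_𝒰 ≤ ln|𝒰| / ln(Δ(F)/a_k). -/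
open Metric

namespace FinDim

variable {X : Type*} [MetricSpace X]

/-- `ν_F(a)`: the distance from `a` to a nearest other point of `F`. -/
noncomputable def nu (F : Finset X) (a : X) : ℝ :=
  sInf {r : ℝ | ∃ x ∈ F, x ≠ a ∧ r = dist a x}

/-- `δ(F)`: the separation of `F`, the minimum distance between distinct points. -/
noncomputable def sep (F : Finset X) : ℝ :=
  sInf {r : ℝ | ∃ x ∈ F, ∃ y ∈ F, x ≠ y ∧ r = dist x y}

/-- A 2-covering of `F`: a family of subsets of `F` covering `F`,
each member having at least two elements. -/
def IsTwoCover (F : Finset X) (U : Finset (Finset X)) : Prop :=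
  (∀ V ∈ U, V ⊆ F) ∧ (∀ V ∈ U, 2 ≤ V.card) ∧ ∀ a ∈ F, ∃ V ∈ U, a ∈ V

/-- `Δ(𝒰)`: maximum diameter of the members of the family `𝒰`. -/
noncomputable def coverDiam (U : Finset (Finset X)) : ℝ :=
  sSup {r : ℝ | ∃ V ∈ U, r = Metric.diam (V : Set X)}

/-- `∇(F)`: the covering diameter of `F`. -/
noncomputable def nablaF (F : Finset X) : ℝ :=
  sInf {r : ℝ | ∃ U : Finset (Finset X), IsTwoCover F U ∧ r = coverDiam U}

/-- `a` is a focal point of `F`. -/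
def IsFocal (F : Finset X) (a : X) : Prop :=
  a ∈ F ∧ ∀ x ∈ F, x ≠ a → dist a x = Metric.diam (F : Set X)

/-- `H^s_𝒰(F) = Σ_{U ∈ 𝒰} Δ(U)^s`. -/
noncomputable def Hcov (U : Finset (Finset X)) (s : ℝ) : ℝ :=
  ∑ V ∈ U, Metric.diam (V : Set X) ^ s

/-- `H^s(F)`: minimum of `H^s_𝒰(F)` over 2-coverings `𝒰` with `Δ(𝒰) = ∇(F)`. -/
noncomputable def HH (F : Finset X) (s : ℝ) : ℝ :=
  sInf {h : ℝ | ∃ U : Finset (Finset X),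
    IsTwoCover F U ∧ coverDiam U = nablaF F ∧ h = Hcov U s}

/-- The finite Hausdorff dimension: the unique `s₀ ∈ (0,∞)` with
`H^{s₀}(F) = Δ(F)^{s₀}` (when `F` has no focal points). -/
noncomputable def dimfH (F : Finset X) : ℝ :=
  sInf {s : ℝ | 0 < s ∧ HH F s = Metric.diam (F : Set X) ^ s}

/-- `T_{∇(F)}(F)`: the minimal cardinality of a 2-covering `𝒰` with `Δ(𝒰) = ∇(F)`. -/
noncomputable def Tmin (F : Finset X) : ℕ :=
  sInf {n : ℕ | ∃ U : Finset (Finset X),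
    IsTwoCover F U ∧ coverDiam U = nablaF F ∧ U.card = n}

/-- The finite box dimension `dim_fB(F) = ln T_{∇(F)}(F) / ln (Δ(F)/∇(F))`. -/
noncomputable def dimfB (F : Finset X) : ℝ :=
  Real.log (Tmin F) / Real.log (Metric.diam (F : Set X) / nablaF F)

/-- `ν_A(x)` for a subset `A` of a metric space. -/
noncomputable def nuSet {Z : Type*} [MetricSpace Z] (A : Set Z) (x : Z) : ℝ :=
  sInf {r : ℝ | ∃ y ∈ A, y ≠ x ∧ r = dist x y}

/-- `∇(A) = sup {ν_A(x) : x ∈ A}` for a subset `A` of a metric space. -/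
noncomputable def nablaSet {Z : Type*} [MetricSpace Z] (A : Set Z) : ℝ :=
  sSup {r : ℝ | ∃ x ∈ A, r = nuSet A x}

end FinDim

/-!
Every term `Δ(V)^s` of `H^s_𝒰(F) = Δ(F)^s` lies between `a₁^s` and `a_k^s`, so
`|𝒰| a₁^s ≤ Δ(F)^s ≤ |𝒰| a_k^s`; taking logarithms bounds `s` on both sides. The remaining
inequality is `δ(F) ≤ a₁`, as any member of `𝒰` contains two distinct points of `F`.
-/

namespace Real

variable {n a D s : ℝ}

theorem log_le_mul_log_div (ha : 0 < a) (hD : 0 < D) (hn : 0 < n)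
    (h : n * a ^ s ≤ D ^ s) : log n ≤ s * log (D / a) := by
  have hnDa : n ≤ (D / a) ^ s := by
    rwa [div_rpow hD.le ha.le, le_div_iff₀ (rpow_pos_of_pos ha s)]
  rw [← log_rpow (div_pos hD ha)]
  exact log_le_log hn hnDa

theorem mul_log_div_le_log (ha : 0 < a) (hD : 0 < D)
    (h : D ^ s ≤ n * a ^ s) : s * log (D / a) ≤ log n := by
  have hDan : (D / a) ^ s ≤ n := by
    rwa [div_rpow hD.le ha.le, div_le_iff₀ (rpow_pos_of_pos ha s)]
  rw [← log_rpow (div_pos hD ha)]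
  exact log_le_log (rpow_pos_of_pos (div_pos hD ha) s) hDan

variable {ι : Type*} {t : Finset ι} {f : ι → ℝ}

theorem log_card_le_mul_log_div_of_sum_rpow_eq (ht : t.Nonempty) (ha : 0 < a) (hD : 0 < D)
    (hs : 0 ≤ s) (hf : ∀ i ∈ t, a ≤ f i) (hsum : ∑ i ∈ t, f i ^ s = D ^ s) :
    log t.card ≤ s * log (D / a) := by
  refine log_le_mul_log_div ha hD (by exact_mod_cast ht.card_pos) ?_
  rw [← hsum, ← nsmul_eq_mul]
  exact Finset.card_nsmul_le_sum _ _ _ fun i hi => rpow_le_rpow ha.le (hf i hi) hs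

theorem mul_log_div_le_log_card_of_sum_rpow_eq (ha : 0 < a) (hD : 0 < D) (hs : 0 ≤ s)
    (hf₀ : ∀ i ∈ t, 0 ≤ f i) (hf : ∀ i ∈ t, f i ≤ a) (hsum : ∑ i ∈ t, f i ^ s = D ^ s) :
    s * log (D / a) ≤ log t.card := by
  refine mul_log_div_le_log ha hD ?_
  rw [← hsum, ← nsmul_eq_mul]
  exact Finset.sum_le_card_nsmul _ _ _ fun i hi => rpow_le_rpow (hf₀ i hi) (hf i hi) hs

end Real

namespace FinDim

open Finset

variable {X : Type*} [MetricSpace X]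

theorem diam_pos_of_one_lt_card {V : Finset X} (hV : 1 < #V) : 0 < diam (V : Set X) :=
  diam_pos (Finset.one_lt_card_iff_nontrivial.mp hV) V.finite_toSet.isBounded

theorem sep_le_dist {F : Finset X} {x y : X} (hx : x ∈ F) (hy : y ∈ F) (hxy : x ≠ y) :
    sep F ≤ dist x y :=
  csInf_le ⟨0, by rintro r ⟨x, -, y, -, -, rfl⟩; exact dist_nonneg⟩ ⟨x, hx, y, hy, hxy, rfl⟩

theorem sep_pos {F : Finset X} (hF : 1 < #F) : 0 < sep F := by
  set T : Set ℝ := {r | ∃ x ∈ F, ∃ y ∈ F, x ≠ y ∧ r = dist x y}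
  have hT : T.Finite :=
    ((F ×ˢ F).image fun p => dist p.1 p.2).finite_toSet.subset <| by
      rintro r ⟨x, hx, y, hy, -, rfl⟩
      exact mem_image.mpr ⟨(x, y), mem_product.mpr ⟨hx, hy⟩, rfl⟩
  obtain ⟨x, hx, y, hy, hxy⟩ := one_lt_card.mp hF
  obtain ⟨x, -, y, -, hxy, hsep⟩ : sInf T ∈ T :=
    Set.Nonempty.csInf_mem ⟨_, x, hx, y, hy, hxy, rfl⟩ hT
  exact (dist_pos.mpr hxy).trans_eq hsep.symm

theorem sep_le_diam {F V : Finset X} (hVF : V ⊆ F) (hV : 1 < #V) :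
    sep F ≤ diam (V : Set X) := by
  obtain ⟨x, hx, y, hy, hxy⟩ := one_lt_card.mp hV
  exact (sep_le_dist (hVF hx) (hVF hy) hxy).trans
    (dist_le_diam_of_mem V.finite_toSet.isBounded hx hy)

theorem diam_le_coverDiam {U : Finset (Finset X)} {V : Finset X} (hV : V ∈ U) :
    diam (V : Set X) ≤ coverDiam U := by
  have hfin : {r : ℝ | ∃ V ∈ U, r = diam (V : Set X)}.Finite :=
    (Set.Finite.image (fun V : Finset X => diam (V : Set X)) U.finite_toSet).subset <| by
      rintro r ⟨V, hV, rfl⟩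
      exact ⟨V, hV, rfl⟩
  exact le_csSup hfin.bddAbove ⟨V, hV, rfl⟩

end FinDim

open FinDim in
theorem stmt5_general {X : Type*} [MetricSpace X] (F : Finset X) (hF : 2 ≤ F.card)
    (U : Finset (Finset X)) (hU : IsTwoCover F U)
    (hUd : coverDiam U < Metric.diam (F : Set X))
    (a1 ak : ℝ)
    (ha1 : IsLeast {r : ℝ | ∃ V ∈ U, r = Metric.diam (V : Set X)} a1)
    (hak : ak = coverDiam U)
    (s : ℝ) (hs : 0 < s) (hseq : Hcov U s = Metric.diam (F : Set X) ^ s) :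
    Real.log (U.card : ℝ) / Real.log (Metric.diam (F : Set X) / sep F) ≤
      Real.log (U.card : ℝ) / Real.log (Metric.diam (F : Set X) / a1) ∧
    Real.log (U.card : ℝ) / Real.log (Metric.diam (F : Set X) / a1) ≤ s ∧
    s ≤ Real.log (U.card : ℝ) / Real.log (Metric.diam (F : Set X) / ak) := by
  obtain ⟨W, hWU, rfl⟩ := ha1.1
  have hW : 1 < W.card := hU.2.1 W hWU
  have hge_a1 : ∀ V ∈ U, diam (W : Set X) ≤ diam (V : Set X) := fun V hV => ha1.2 ⟨V, hV, rfl⟩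
  have hle_ak : ∀ V ∈ U, diam (V : Set X) ≤ ak := fun V hV => hak ▸ diam_le_coverDiam hV
  have ha1_pos : 0 < diam (W : Set X) := diam_pos_of_one_lt_card hW
  have hak_pos : 0 < ak := ha1_pos.trans_le (hle_ak W hWU)
  have hak_lt : ak < diam (F : Set X) := hak ▸ hUd
  have ha1_lt : diam (W : Set X) < diam (F : Set X) := (hle_ak W hWU).trans_lt hak_lt
  have hD_pos : 0 < diam (F : Set X) := hak_pos.trans hak_lt
  have hlog_a1 : 0 < Real.log (diam (F : Set X) / diam (W : Set X)) :=
    Real.log_pos ((one_lt_div ha1_pos).mpr ha1_lt)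
  have hlog_ak : 0 < Real.log (diam (F : Set X) / ak) :=
    Real.log_pos ((one_lt_div hak_pos).mpr hak_lt)
  have hsep : sep F ≤ diam (W : Set X) := sep_le_diam (hU.1 W hWU) hW
  refine ⟨?_, (div_le_iff₀ hlog_a1).mpr ?_, (le_div_iff₀ hlog_ak).mpr ?_⟩
  · refine div_le_div_of_nonneg_left (Real.log_nonneg ?_) hlog_a1 (Real.log_le_log ?_ ?_)
    · exact_mod_cast Finset.card_pos.mpr ⟨W, hWU⟩
    · exact div_pos hD_pos ha1_pos
    · exact div_le_div_of_nonneg_left hD_pos.le (sep_pos hF) hsep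
  · exact Real.log_card_le_mul_log_div_of_sum_rpow_eq ⟨W, hWU⟩ ha1_pos hD_pos hs.le hge_a1 hseq
  · exact Real.mul_log_div_le_log_card_of_sum_rpow_eq hak_pos hD_pos hs.le
      (fun _ _ => diam_nonneg) hle_ak hseq

open FinDim in
/-- Bounds on the solution `s_𝒰` of `H^s_𝒰(F) = Δ(F)^s`. -/
theorem stmt5 {X : Type*} [MetricSpace X] (F : Finset X) (hF : 2 ≤ F.card)
    (hfoc : ∀ a, ¬ IsFocal F a)
    (U : Finset (Finset X)) (hU : IsTwoCover F U)
    (hUd : coverDiam U < Metric.diam (F : Set X))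
    (a1 ak : ℝ)
    (ha1 : IsLeast {r : ℝ | ∃ V ∈ U, r = Metric.diam (V : Set X)} a1)
    (hak : ak = coverDiam U)
    (s : ℝ) (hs : 0 < s) (hseq : Hcov U s = Metric.diam (F : Set X) ^ s) :
    Real.log (U.card : ℝ) / Real.log (Metric.diam (F : Set X) / sep F) ≤
      Real.log (U.card : ℝ) / Real.log (Metric.diam (F : Set X) / a1) ∧
    Real.log (U.card : ℝ) / Real.log (Metric.diam (F : Set X) / a1) ≤ s ∧
    s ≤ Real.log (U.card : ℝ) / Real.log (Metric.diam (F : Set X) / ak) :=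
  stmt5_general F hF U hU hUd a1 ak ha1 hak s hs hseq
end

section
/- Let F be a finite metric space with at least two points and no focal points. Then dim_fH(F) ≤ dim_fB(F) ≤ ln(|F| − 1) / ln(Δ(F)/∇(F)), where |F| is the number of points of F. -/
open Metric

/-!
Write `ν(a)` for the distance from `a` to a nearest other point `n(a)`. Every 2-covering has a
member containing a maximiser `a₀` of `ν` together with another point, so `∇(F) ≥ ν(a₀)`; the
pairs `{a, n(a)}`, `a ≠ n(a₀)`, form a 2-covering of diameter `ν(a₀)` with at most `|F| - 1`
members. Hence `∇(F) = ν(a₀)`, `T ≤ |F| - 1`, and `∇(F) < Δ(F)` unless `a₀` is a focal point.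

For `s_B = dim_fB(F)` we have `T = (Δ/∇)^{s_B}`, so an optimal covering with `T` members gives
`H^{s_B}(F) ≤ T ∇^{s_B} = Δ^{s_B}`, whereas `H^0(F) ≥ 2 > Δ^0`. Being a minimum of finitely
many continuous functions, `s ↦ H^s(F)` is continuous, and the intermediate value theorem
gives a solution of `H^s(F) = Δ^s` in `(0, s_B]`.
-/

open Finset

namespace FinDim

variable {X : Type*} [MetricSpace X] {F : Finset X} {U : Finset (Finset X)}

theorem nu_le_dist {a x : X} (hx : x ∈ F) (hxa : x ≠ a) : nu F a ≤ dist a x :=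
  csInf_le ⟨0, by rintro r ⟨y, -, -, rfl⟩; exact dist_nonneg⟩ ⟨x, hx, hxa, rfl⟩

theorem exists_dist_eq_nu (hF : 1 < #F) (a : X) : ∃ x ∈ F, x ≠ a ∧ dist a x = nu F a := by
  obtain ⟨x, hx, hxa⟩ := exists_mem_ne hF a
  set S := {r : ℝ | ∃ x ∈ F, x ≠ a ∧ r = dist a x}
  have hfin : S.Finite :=
    (F.finite_toSet.image (dist a)).subset (by rintro r ⟨y, hy, -, rfl⟩; exact ⟨y, hy, rfl⟩)
  obtain ⟨y, hy, hya, h⟩ := Set.Nonempty.csInf_mem (s := S) ⟨_, x, hx, hxa, rfl⟩ hfin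
  exact ⟨y, hy, hya, h.symm⟩

theorem nu_pos (hF : 1 < #F) (a : X) : 0 < nu F a := by
  obtain ⟨x, -, hxa, h⟩ := exists_dist_eq_nu hF a
  exact h ▸ dist_pos.2 hxa.symm

theorem le_coverDiam {V : Finset X} (hV : V ∈ U) : diam (V : Set X) ≤ coverDiam U := by
  refine le_csSup ?_ ⟨V, hV, rfl⟩
  refine ((U.finite_toSet.image fun W : Finset X => diam (W : Set X)).subset ?_).bddAbove
  rintro r ⟨W, hW, rfl⟩
  exact ⟨W, hW, rfl⟩

theorem coverDiam_le {r : ℝ} (hU : U.Nonempty) (h : ∀ V ∈ U, diam (V : Set X) ≤ r) :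
    coverDiam U ≤ r := by
  obtain ⟨V, hV⟩ := hU
  exact csSup_le ⟨_, V, hV, rfl⟩ (by rintro _ ⟨W, hW, rfl⟩; exact h W hW)

theorem IsTwoCover.nu_le_coverDiam (hU : IsTwoCover F U) {a : X} (ha : a ∈ F) :
    nu F a ≤ coverDiam U := by
  obtain ⟨V, hV, haV⟩ := hU.2.2 a ha
  obtain ⟨x, hxV, hxa⟩ := exists_mem_ne (hU.2.1 V hV) a
  calc nu F a ≤ dist a x := nu_le_dist (hU.1 V hV hxV) hxa
    _ ≤ diam (V : Set X) := dist_le_diam_of_mem V.finite_toSet.isBounded haV hxV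
    _ ≤ coverDiam U := le_coverDiam hV

theorem IsTwoCover.diam_pos (hU : IsTwoCover F U) {V : Finset X} (hV : V ∈ U) :
    0 < diam (V : Set X) := by
  obtain ⟨a, ha, b, hb, hab⟩ := one_lt_card.1 (hU.2.1 V hV)
  exact (dist_pos.2 hab).trans_le (dist_le_diam_of_mem V.finite_toSet.isBounded ha hb)

theorem IsTwoCover.two_le_card (hU : IsTwoCover F U) (hF : F.Nonempty)
    (hlt : coverDiam U < diam (F : Set X)) : 2 ≤ #U := by
  obtain ⟨a, ha⟩ := hF
  obtain ⟨V, hV, -⟩ := hU.2.2 a ha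
  by_contra! hcard
  obtain ⟨W, rfl⟩ := card_eq_one.1 (by have := card_pos.2 ⟨V, hV⟩; omega : #U = 1)
  have hWF : W = F := (hU.1 W (mem_singleton_self W)).antisymm fun x hx => by
    obtain ⟨V', hV', hxV'⟩ := hU.2.2 x hx
    rwa [mem_singleton.1 hV'] at hxV'
  subst hWF
  exact hlt.not_ge (le_coverDiam (mem_singleton_self W))

theorem exists_twoCover_card_le (hF : 1 < #F) :
    ∃ U : Finset (Finset X), IsTwoCover F U ∧ #U ≤ #F - 1 ∧
      ∀ V ∈ U, ∃ a ∈ F, diam (V : Set X) = nu F a := by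
  classical
  choose! n hnF hna hdist using exists_dist_eq_nu hF
  obtain ⟨a₀, ha₀⟩ := card_pos.1 (by omega : 0 < #F)
  have ha₀' : a₀ ∈ F.erase (n a₀) := mem_erase.2 ⟨(hna a₀).symm, ha₀⟩
  refine ⟨(F.erase (n a₀)).image fun a => {a, n a}, ⟨?_, ?_, fun a ha => ?_⟩, ?_, ?_⟩
  · simp only [mem_image, mem_erase]
    rintro _ ⟨a, ⟨-, ha⟩, rfl⟩
    simp [insert_subset_iff, ha, hnF a]
  · simp only [mem_image, mem_erase]
    rintro _ ⟨a, -, rfl⟩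
    exact (card_pair (hna a).symm).ge
  · by_cases han : a = n a₀
    · exact ⟨{a₀, n a₀}, mem_image_of_mem _ ha₀', by simp [han]⟩
    · exact ⟨{a, n a}, mem_image_of_mem _ (mem_erase.2 ⟨han, ha⟩), mem_insert_self _ _⟩
  · exact card_image_le.trans (card_erase_of_mem (hnF a₀)).le
  · simp only [mem_image, mem_erase]
    rintro _ ⟨a, ⟨-, ha⟩, rfl⟩
    refine ⟨a, ha, ?_⟩
    rw [coe_pair, diam_pair, hdist a]

theorem exists_twoCover_coverDiam_eq_nu (hF : 1 < #F) {a₀ : X} (ha₀ : a₀ ∈ F)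
    (hmax : ∀ a ∈ F, nu F a ≤ nu F a₀) :
    ∃ U : Finset (Finset X), IsTwoCover F U ∧ coverDiam U = nu F a₀ ∧ #U ≤ #F - 1 := by
  obtain ⟨U, hU, hcard, hdiam⟩ := exists_twoCover_card_le hF
  refine ⟨U, hU, le_antisymm ?_ (hU.nu_le_coverDiam ha₀), hcard⟩
  obtain ⟨V, hV, -⟩ := hU.2.2 a₀ ha₀
  refine coverDiam_le ⟨V, hV⟩ fun W hW => ?_
  obtain ⟨a, ha, h⟩ := hdiam W hW
  exact h ▸ hmax a ha

theorem nablaF_eq_nu (hF : 1 < #F) {a₀ : X} (ha₀ : a₀ ∈ F) (hmax : ∀ a ∈ F, nu F a ≤ nu F a₀) :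
    nablaF F = nu F a₀ := by
  obtain ⟨U, hU, hUd, -⟩ := exists_twoCover_coverDiam_eq_nu hF ha₀ hmax
  have hlb : nu F a₀ ∈ lowerBounds {r | ∃ U, IsTwoCover F U ∧ r = coverDiam U} := by
    rintro _ ⟨U', hU', rfl⟩
    exact hU'.nu_le_coverDiam ha₀
  exact le_antisymm (csInf_le ⟨_, hlb⟩ ⟨U, hU, hUd.symm⟩) (le_csInf ⟨_, U, hU, rfl⟩ hlb)

theorem exists_nablaF_eq_nu (hF : 1 < #F) :
    ∃ a₀ ∈ F, (∀ a ∈ F, nu F a ≤ nu F a₀) ∧ nablaF F = nu F a₀ := by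
  obtain ⟨a₀, ha₀, hmax⟩ := F.exists_max_image (nu F) (card_pos.1 (by omega))
  exact ⟨a₀, ha₀, hmax, nablaF_eq_nu hF ha₀ hmax⟩

theorem exists_optimal_twoCover_card_le (hF : 1 < #F) :
    ∃ U : Finset (Finset X), IsTwoCover F U ∧ coverDiam U = nablaF F ∧ #U ≤ #F - 1 := by
  obtain ⟨a₀, ha₀, hmax, h⟩ := exists_nablaF_eq_nu hF
  rw [h]
  exact exists_twoCover_coverDiam_eq_nu hF ha₀ hmax

theorem nablaF_pos (hF : 1 < #F) : 0 < nablaF F := by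
  obtain ⟨a₀, -, -, h⟩ := exists_nablaF_eq_nu hF
  exact h ▸ nu_pos hF a₀

theorem nablaF_lt_diam (hF : 1 < #F) (hfoc : ∀ a, ¬ IsFocal F a) :
    nablaF F < diam (F : Set X) := by
  obtain ⟨a₀, ha₀, -, h⟩ := exists_nablaF_eq_nu hF
  have hbdd : Bornology.IsBounded (F : Set X) := F.finite_toSet.isBounded
  obtain ⟨x, hx, hxa, hdist⟩ := exists_dist_eq_nu hF a₀
  refine h ▸ (hdist ▸ dist_le_diam_of_mem hbdd ha₀ hx).lt_of_ne fun heq => hfoc a₀ ⟨ha₀, ?_⟩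
  exact fun y hy hya => (dist_le_diam_of_mem hbdd ha₀ hy).antisymm (heq ▸ nu_le_dist hy hya)

theorem exists_card_eq_Tmin (hF : 1 < #F) :
    ∃ U : Finset (Finset X), IsTwoCover F U ∧ coverDiam U = nablaF F ∧ #U = Tmin F := by
  obtain ⟨U, hU, hUd, -⟩ := exists_optimal_twoCover_card_le hF
  have hne : {n | ∃ U : Finset (Finset X), IsTwoCover F U ∧ coverDiam U = nablaF F ∧ #U = n}.Nonempty :=
    ⟨_, U, hU, hUd, rfl⟩
  exact Nat.sInf_mem hne

theorem Tmin_le (hF : 1 < #F) : Tmin F ≤ #F - 1 := by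
  obtain ⟨U, hU, hUd, hcard⟩ := exists_optimal_twoCover_card_le hF
  have hmem : #U ∈ {n | ∃ U : Finset (Finset X), IsTwoCover F U ∧ coverDiam U = nablaF F ∧ #U = n} :=
    ⟨U, hU, hUd, rfl⟩
  exact (Nat.sInf_le hmem).trans hcard

theorem two_le_Tmin (hF : 1 < #F) (hfoc : ∀ a, ¬ IsFocal F a) : 2 ≤ Tmin F := by
  obtain ⟨U, hU, hUd, hcard⟩ := exists_card_eq_Tmin hF
  exact hcard ▸ hU.two_le_card (card_pos.1 (by omega)) (hUd ▸ nablaF_lt_diam hF hfoc)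

theorem Hcov_zero : Hcov U 0 = #U := by
  simp [Hcov]

theorem Hcov_le_card_mul {s : ℝ} (hs : 0 ≤ s) : Hcov U s ≤ #U * coverDiam U ^ s := by
  rw [← nsmul_eq_mul, ← sum_const]
  exact sum_le_sum fun _ hV => Real.rpow_le_rpow diam_nonneg (le_coverDiam hV) hs

theorem IsTwoCover.continuous_Hcov (hU : IsTwoCover F U) : Continuous (Hcov U) :=
  continuous_finsetSum _ fun _ hV => Real.continuous_const_rpow (hU.diam_pos hV).ne'

theorem HH_le_Hcov (hU : IsTwoCover F U) (hUd : coverDiam U = nablaF F) (s : ℝ) :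
    HH F s ≤ Hcov U s := by
  refine csInf_le ⟨0, ?_⟩ ⟨U, hU, hUd, rfl⟩
  rintro _ ⟨U', -, -, rfl⟩
  exact sum_nonneg fun V _ => Real.rpow_nonneg diam_nonneg s

theorem two_le_HH_zero (hF : 1 < #F) (hfoc : ∀ a, ¬ IsFocal F a) : 2 ≤ HH F 0 := by
  obtain ⟨U, hU, hUd, -⟩ := exists_optimal_twoCover_card_le hF
  refine le_csInf ⟨_, U, hU, hUd, rfl⟩ ?_
  rintro _ ⟨U', hU', hU'd, rfl⟩
  rw [Hcov_zero]
  exact_mod_cast hU'.two_le_card (card_pos.1 (by omega)) (hU'd ▸ nablaF_lt_diam hF hfoc)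

open Classical in
noncomputable def optimalCovers (F : Finset X) : Finset (Finset (Finset X)) :=
  F.powerset.powerset.filter fun U => IsTwoCover F U ∧ coverDiam U = nablaF F

theorem mem_optimalCovers : U ∈ optimalCovers F ↔ IsTwoCover F U ∧ coverDiam U = nablaF F := by
  classical
  simp only [optimalCovers, mem_filter, mem_powerset, and_iff_right_iff_imp]
  exact fun hU V hV => mem_powerset.2 (hU.1.1 V hV)

theorem HH_eq_inf' (h : (optimalCovers F).Nonempty) (s : ℝ) :
    HH F s = (optimalCovers F).inf' h (Hcov · s) := by
  rw [inf'_eq_csInf_image, HH]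
  congr 1
  ext r
  simp [mem_optimalCovers, eq_comm, and_assoc]

theorem continuous_HH (hF : 1 < #F) : Continuous (HH F) := by
  obtain ⟨U, hU, hUd, -⟩ := exists_optimal_twoCover_card_le hF
  have h : (optimalCovers F).Nonempty := ⟨U, mem_optimalCovers.2 ⟨hU, hUd⟩⟩
  rw [funext (HH_eq_inf' h)]
  exact Continuous.finset_inf'_apply h fun U' hU' => (mem_optimalCovers.1 hU').1.continuous_Hcov

theorem dimfH_le_of_HH_le (hF : 1 < #F) (hfoc : ∀ a, ¬ IsFocal F a) {s : ℝ} (hs : 0 ≤ s)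
    (h : HH F s ≤ diam (F : Set X) ^ s) : dimfH F ≤ s := by
  have hΔ : diam (F : Set X) ≠ 0 := ((nablaF_pos hF).trans (nablaF_lt_diam hF hfoc)).ne'
  have hcont : ContinuousOn (fun t => HH F t - diam (F : Set X) ^ t) (Set.Icc 0 s) :=
    ((continuous_HH hF).sub (Real.continuous_const_rpow hΔ)).continuousOn
  have hzero : (0 : ℝ) ∈ Set.Icc (HH F s - diam (F : Set X) ^ s)
      (HH F 0 - diam (F : Set X) ^ (0 : ℝ)) := by
    have := two_le_HH_zero hF hfoc
    rw [Real.rpow_zero]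
    constructor <;> linarith
  obtain ⟨t, ⟨ht0, hts⟩, ht⟩ := intermediate_value_Icc' hs hcont hzero
  have htpos : 0 < t := ht0.lt_of_ne <| by
    rintro rfl
    have := two_le_HH_zero hF hfoc
    simp only [Real.rpow_zero] at ht
    linarith
  have hsol : t ∈ {s : ℝ | 0 < s ∧ HH F s = diam (F : Set X) ^ s} := ⟨htpos, sub_eq_zero.1 ht⟩
  exact (csInf_le ⟨0, fun _ h => h.1.le⟩ hsol).trans hts

theorem one_lt_diam_div_nablaF (hF : 1 < #F) (hfoc : ∀ a, ¬ IsFocal F a) :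
    1 < diam (F : Set X) / nablaF F :=
  (one_lt_div (nablaF_pos hF)).2 (nablaF_lt_diam hF hfoc)

theorem dimfB_nonneg (hF : 1 < #F) (hfoc : ∀ a, ¬ IsFocal F a) : 0 ≤ dimfB F := by
  have hT : (1 : ℝ) ≤ Tmin F := by exact_mod_cast (two_le_Tmin hF hfoc).trans' one_le_two
  exact div_nonneg (Real.log_nonneg hT) (Real.log_pos (one_lt_diam_div_nablaF hF hfoc)).le

theorem HH_dimfB_le (hF : 1 < #F) (hfoc : ∀ a, ¬ IsFocal F a) :
    HH F (dimfB F) ≤ diam (F : Set X) ^ dimfB F := by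
  have hpos := nablaF_pos hF
  have hratio := one_lt_diam_div_nablaF hF hfoc
  have hT : (Tmin F : ℝ) = (diam (F : Set X) / nablaF F) ^ dimfB F :=
    (Real.rpow_logb (by linarith) hratio.ne' (Nat.cast_pos.2 (by have := two_le_Tmin hF hfoc; omega))).symm
  obtain ⟨U, hU, hUd, hcard⟩ := exists_card_eq_Tmin hF
  calc HH F (dimfB F) ≤ Hcov U (dimfB F) := HH_le_Hcov hU hUd _
    _ ≤ #U * coverDiam U ^ dimfB F := Hcov_le_card_mul (dimfB_nonneg hF hfoc)
    _ = diam (F : Set X) ^ dimfB F := by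
      rw [hcard, hUd, hT, ← Real.mul_rpow (by linarith) hpos.le, div_mul_cancel₀ _ hpos.ne']

end FinDim

open FinDim in
/-- `dim_fH(F) ≤ dim_fB(F) ≤ ln(|F|−1)/ln(Δ(F)/∇(F))`. -/
theorem stmt8 {X : Type*} [MetricSpace X] (F : Finset X) (hF : 2 ≤ F.card)
    (hfoc : ∀ a, ¬ IsFocal F a) :
    dimfH F ≤ dimfB F ∧
    dimfB F ≤ Real.log ((F.card : ℝ) - 1) / Real.log (Metric.diam (F : Set X) / nablaF F) := by
  have hF' : 1 < F.card := hF
  have hlog : 0 < Real.log (diam (F : Set X) / nablaF F) :=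
    Real.log_pos (one_lt_diam_div_nablaF hF' hfoc)
  have hTpos : (0 : ℝ) < Tmin F := by exact_mod_cast (two_le_Tmin hF' hfoc).trans_lt' two_pos
  have hTle : (Tmin F : ℝ) ≤ F.card - 1 := by
    rw [le_sub_iff_add_le]
    exact_mod_cast (by have := Tmin_le hF'; omega : Tmin F + 1 ≤ F.card)
  exact ⟨dimfH_le_of_HH_le hF' hfoc (dimfB_nonneg hF' hfoc) (HH_dimfB_le hF' hfoc),
    div_le_div_of_nonneg_right (Real.log_le_log hTpos hTle) hlog.le⟩
end
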